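/- Let T be a Lie-Yamaguti algebra over a field k of characteristic zero, r ≥ 1, and let (F_n, G_n)_{n≥0} be a formal one-parameter deformation of T with F_i = 0 and G_i = 0 for all 1 ≤ i ≤ r-1. Then (F_r, G_r) is a (2,3)-cocycle with respect to the regular representation: δ_I(F_r,G_r) = 0, δ_II(F_r,G_r) = 0, δ*_I(F_r,G_r) = 0 and δ*_II(F_r,G_r) = 0. -/

import Mathlib

structure LieYamaguti (k T : Type*) [Field k] [CharZero k] [AddCommGroup T] [Module k T] where
  mul : T →ₗ[k] T →ₗ[k] T
  tri : T →ₗ[k] T →ₗ[k] T →ₗ[k] T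
  ly1 : ∀ a : T, mul a a = 0
  ly2 : ∀ a b : T, tri a a b = 0
  ly3 : ∀ a b c : T, tri a b c + tri b c a + tri c a b
      + mul (mul a b) c + mul (mul b c) a + mul (mul c a) b = 0
  ly4 : ∀ a b c d : T, tri (mul a b) c d + tri (mul b c) a d + tri (mul c a) b d = 0
  ly5 : ∀ a b c d : T, tri a b (mul c d) = mul (tri a b c) d + mul c (tri a b d)
  ly6 : ∀ a b c d e : T, tri a b (tri c d e)
      = tri (tri a b c) d e + tri c (tri a b d) e + tri c d (tri a b e)

/-- `f : T × T → V` is bilinear. -/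
def IsBilin (k : Type*) {T V : Type*} [Field k] [AddCommGroup T] [Module k T]
    [AddCommGroup V] [Module k V] (f : T → T → V) : Prop :=
  (∀ b, IsLinearMap k (fun a => f a b)) ∧ (∀ a, IsLinearMap k (fun b => f a b))

/-- `g : T × T × T → V` is trilinear. -/
def IsTrilin (k : Type*) {T V : Type*} [Field k] [AddCommGroup T] [Module k T]
    [AddCommGroup V] [Module k V] (g : T → T → T → V) : Prop :=
  (∀ b c, IsLinearMap k (fun a => g a b c)) ∧ (∀ a c, IsLinearMap k (fun b => g a b c)) ∧
  (∀ a b, IsLinearMap k (fun c => g a b c))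

/-- A formal one-parameter deformation of the Lie-Yamaguti algebra `L`. -/
structure LYDeform (k T : Type*) [Field k] [CharZero k] [AddCommGroup T] [Module k T]
    (L : LieYamaguti k T) where
  F : ℕ → T → T → T
  G : ℕ → T → T → T → T
  Fbil : ∀ n, IsBilin k (F n)
  Gtril : ∀ n, IsTrilin k (G n)
  F0 : ∀ a b : T, F 0 a b = L.mul a b
  G0 : ∀ a b c : T, G 0 a b c = L.tri a b c
  Falt : ∀ n, ∀ a : T, F n a a = 0
  Galt : ∀ n, ∀ a b : T, G n a a b = 0
  d1 : ∀ n, ∀ a b c : T,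
    (∑ p ∈ Finset.HasAntidiagonal.antidiagonal n,
      (F p.1 (F p.2 a b) c + F p.1 (F p.2 b c) a + F p.1 (F p.2 c a) b))
      + G n a b c + G n b c a + G n c a b = 0
  d2 : ∀ n, ∀ a b c d : T,
    ∑ p ∈ Finset.HasAntidiagonal.antidiagonal n,
      (G p.1 (F p.2 a b) c d + G p.1 (F p.2 b c) a d + G p.1 (F p.2 c a) b d) = 0
  d3 : ∀ n, ∀ a b c d : T,
    ∑ p ∈ Finset.HasAntidiagonal.antidiagonal n,
      (G p.1 a b (F p.2 c d) - F p.1 (G p.2 a b c) d - F p.1 c (G p.2 a b d)) = 0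
  d4 : ∀ n, ∀ a b c d e : T,
    ∑ p ∈ Finset.HasAntidiagonal.antidiagonal n,
      (G p.1 a b (G p.2 c d e) - G p.1 (G p.2 a b c) d e
        - G p.1 c (G p.2 a b d) e - G p.1 c d (G p.2 a b e)) = 0

variable {k T : Type*} [Field k] [CharZero k] [AddCommGroup T] [Module k T]

/-- `δ_I(f,g)`, with respect to the regular representation. -/
def rdI (L : LieYamaguti k T) (f : T → T → T) (g : T → T → T → T) (a b c d : T) : T :=
  - L.mul c (g a b d) + L.mul d (g a b c) + g a b (L.mul c d)
    + L.tri a b (f c d) - f (L.tri a b c) d - f c (L.tri a b d)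

/-- `δ_II(f,g)`, with respect to the regular representation. -/
def rdII (L : LieYamaguti k T) (_f : T → T → T) (g : T → T → T → T) (a b c d e : T) : T :=
  - L.tri (g a b c) d e + L.tri (g a b d) c e + L.tri a b (g c d e) - L.tri c d (g a b e)
    + g a b (L.tri c d e) - g (L.tri a b c) d e - g c (L.tri a b d) e - g c d (L.tri a b e)

/-- `δ*_I(f,g)`, with respect to the regular representation. -/
def rdsI (L : LieYamaguti k T) (f : T → T → T) (g : T → T → T → T) (a b c : T) : T :=
  - L.mul a (f b c) - L.mul b (f c a) - L.mul c (f a b)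
    + f (L.mul a b) c + f (L.mul b c) a + f (L.mul c a) b
    + g a b c + g b c a + g c a b

/-- `δ*_II(f,g)`, with respect to the regular representation. -/
def rdsII (L : LieYamaguti k T) (f : T → T → T) (g : T → T → T → T) (a b c d : T) : T :=
  L.tri (f b c) a d + L.tri (f c a) b d + L.tri (f a b) c d
    + g (L.mul a b) c d + g (L.mul b c) a d + g (L.mul c a) b d


/-!
In the deformation equations at order `r`, every summand indexed by `(i, j)` is an outer map
`F_i` or `G_i` applied to inner maps `F_j`, `G_j`, so it vanishes when `0 < i < r`. Only the
terms `(0, r)` and `(r, 0)` survive, and after rewriting `F_0`, `G_0` as the products of `T` they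
are exactly the four coboundary expressions, up to the skew-symmetries `a * b = -(b * a)` and
`[a, b, c] = -[b, a, c]`.
-/

open Finset

theorem Finset.Nat.sum_antidiagonal_eq_add_of_forall_ne_zero {M : Type*} [AddCommMonoid M]
    {n : ℕ} (hn : n ≠ 0) (f : ℕ × ℕ → M)
    (hf : ∀ i j, i + j = n → i ≠ 0 → j ≠ 0 → f (i, j) = 0) :
    ∑ p ∈ antidiagonal n, f p = f (0, n) + f (n, 0) := by
  have hends : ({(0, n), (n, 0)} : Finset (ℕ × ℕ)) ⊆ antidiagonal n := by
    intro p hp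
    rcases Finset.mem_insert.mp hp with rfl | hp
    · simp
    · simp [Finset.mem_singleton.mp hp]
  rw [← Finset.sum_subset hends]
  · rw [Finset.sum_pair (by simp [Prod.ext_iff, hn])]
  · rintro ⟨i, j⟩ hij hnot
    simp only [Finset.mem_insert, Finset.mem_singleton, Prod.mk.injEq, not_or, not_and_or] at hnot
    have hsum : i + j = n := mem_antidiagonal.mp hij
    exact hf i j hsum (by omega) (by omega)

namespace LieYamaguti

variable (L : LieYamaguti k T)

theorem mul_anticomm (x y : T) : L.mul x y = -L.mul y x := by
  have h := L.ly1 (x + y)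
  simp only [map_add, LinearMap.add_apply, L.ly1, zero_add, add_zero] at h
  exact eq_neg_of_add_eq_zero_right h

theorem tri_anticomm (x y z : T) : L.tri x y z = -L.tri y x z := by
  have h := L.ly2 (x + y) z
  simp only [map_add, LinearMap.add_apply, L.ly2, zero_add, add_zero] at h
  exact eq_neg_of_add_eq_zero_right h

end LieYamaguti

namespace LYDeform

variable {L : LieYamaguti k T} (Df : LYDeform k T L) {r : ℕ} (hr : 1 ≤ r)
  (hvan : ∀ i, 1 ≤ i → i < r → (∀ a b : T, Df.F i a b = 0) ∧ (∀ a b c : T, Df.G i a b c = 0))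
include hr hvan

theorem sum_antidiagonal_eq_ends (f : ℕ × ℕ → T)
    (hf : ∀ i j, (∀ a b, Df.F i a b = 0) → (∀ a b c, Df.G i a b c = 0) → f (i, j) = 0) :
    ∑ p ∈ antidiagonal r, f p = f (0, r) + f (r, 0) :=
  Finset.Nat.sum_antidiagonal_eq_add_of_forall_ne_zero (by omega) f fun i j hij hi hj =>
    hf i j (hvan i (by omega) (by omega)).1 (hvan i (by omega) (by omega)).2

theorem rdI_eq_zero (a b c d : T) : rdI L (Df.F r) (Df.G r) a b c d = 0 := by
  have h := Df.d3 r a b c d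
  rw [Df.sum_antidiagonal_eq_ends hr hvan _ fun i j hF hG => by simp [hF, hG]] at h
  simp only [Df.F0, Df.G0] at h
  rw [rdI, L.mul_anticomm d, ← h]
  abel

theorem rdII_eq_zero (a b c d e : T) : rdII L (Df.F r) (Df.G r) a b c d e = 0 := by
  have h := Df.d4 r a b c d e
  rw [Df.sum_antidiagonal_eq_ends hr hvan _ fun i j _ hG => by simp [hG]] at h
  simp only [Df.G0] at h
  rw [rdII, L.tri_anticomm (Df.G r a b d), ← h]
  abel

theorem rdsI_eq_zero (a b c : T) : rdsI L (Df.F r) (Df.G r) a b c = 0 := by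
  have h := Df.d1 r a b c
  rw [Df.sum_antidiagonal_eq_ends hr hvan _ fun i j hF _ => by simp [hF]] at h
  simp only [Df.F0] at h
  rw [rdsI, L.mul_anticomm a, L.mul_anticomm b, L.mul_anticomm c, ← h]
  abel

theorem rdsII_eq_zero (a b c d : T) : rdsII L (Df.F r) (Df.G r) a b c d = 0 := by
  have h := Df.d2 r a b c d
  rw [Df.sum_antidiagonal_eq_ends hr hvan _ fun i j _ hG => by simp [hG]] at h
  simp only [Df.F0, Df.G0] at h
  rw [rdsII, ← h]
  abel

end LYDeform

/-- If a formal deformation has `F_i = 0` and `G_i = 0` for `1 ≤ i ≤ r-1`, then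
`(F_r, G_r)` is a (2,3)-cocycle with respect to the regular representation. -/
theorem first_nonzero_term_is_cocycle (L : LieYamaguti k T) (Df : LYDeform k T L)
    (r : ℕ) (hr : 1 ≤ r)
    (hvan : ∀ i, 1 ≤ i → i < r → (∀ a b : T, Df.F i a b = 0) ∧ (∀ a b c : T, Df.G i a b c = 0)) :
    (∀ a b c d : T, rdI L (Df.F r) (Df.G r) a b c d = 0) ∧
    (∀ a b c d e : T, rdII L (Df.F r) (Df.G r) a b c d e = 0) ∧
    (∀ a b c : T, rdsI L (Df.F r) (Df.G r) a b c = 0) ∧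
    (∀ a b c d : T, rdsII L (Df.F r) (Df.G r) a b c d = 0) :=
  ⟨Df.rdI_eq_zero hr hvan, Df.rdII_eq_zero hr hvan, Df.rdsI_eq_zero hr hvan,
    Df.rdsII_eq_zero hr hvan⟩
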